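/- arXiv:1407.0637 — 3 statements merged into one kernel-verified Lean document; each statement's English description precedes it below -/
import Mathlib

section
/- Let ε > 0 be real, let n ≥ k ≥ 1 be natural numbers, define γ_i = 1 + (ε / H_k)(H_k − H_{k−i}) for 0 ≤ i ≤ k, and let j be a natural number with 0 ≤ j < k. Let α_0, …, α_k and α'_0, …, α'_k be real numbers such that α_j ≤ γ_j, α_i ≥ γ_i for all i with j < i ≤ k, and α'_i ≤ α_j for all i with j < i ≤ k. Then ∑_{i=j+1}^{k} ( α_i − α'_i ) ≥ (ε / H_n) · (k − j). -/
/-!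
Since `α'_i ≤ α_j ≤ γ_j ≤ γ_i ≤ α_i`, the `i`-th term of the sum is at least
`γ_i - γ_j = (ε / H_k) (H_{k-j} - H_{k-i})`. With `m = k - j` and `t = k - i` these lower bounds
add up to `(ε / H_k) ∑_{t<m} (H_m - H_t) = (ε / H_k) m`, because `∑_{t<m} H_t = m H_m - m`;
finally `H_k ≤ H_n`.
-/

noncomputable def harm (m : ℕ) : ℝ := ∑ i ∈ Finset.range m, (1 : ℝ) / (i + 1)

open Finset

lemma harm_succ (m : ℕ) : harm (m + 1) = harm m + 1 / (m + 1) := by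
  simp [harm, sum_range_succ]

lemma harm_mono : Monotone harm := fun _ _ hab =>
  sum_le_sum_of_subset_of_nonneg (range_subset_range.2 hab) fun _ _ _ => by positivity

lemma harm_pos {m : ℕ} (hm : 0 < m) : 0 < harm m :=
  sum_pos (fun _ _ => by positivity) (nonempty_range_iff.2 hm.ne')

lemma sum_range_harm (m : ℕ) : ∑ t ∈ range m, harm t = m * harm m - m := by
  induction m with
  | zero => simp
  | succ m ih =>
    rw [sum_range_succ, ih, harm_succ]
    push_cast
    field_simp
    ring

lemma sum_range_harm_sub (m : ℕ) : ∑ t ∈ range m, (harm m - harm t) = m := by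
  rw [sum_sub_distrib, sum_range_harm, sum_const, card_range, nsmul_eq_mul]
  ring

lemma sum_Icc_comp_sub {M : Type*} [AddCommMonoid M] (f : ℕ → M) {j k : ℕ} (hjk : j ≤ k) :
    ∑ i ∈ Icc (j + 1) k, f (k - i) = ∑ t ∈ range (k - j), f t :=
  sum_nbij' (k - ·) (k - ·)
    (fun _ h => by rw [mem_Icc] at h; rw [mem_range]; omega)
    (fun _ h => by rw [mem_range] at h; rw [mem_Icc]; omega)
    (fun _ h => by rw [mem_Icc] at h; omega)
    (fun _ h => by rw [mem_range] at h; omega)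
    fun _ _ => rfl

theorem stretch_decrease_per_edge_general (ε : ℝ) (hε : 0 < ε) (n k : ℕ)
    (hkn : k ≤ n) (j : ℕ) (hj : j < k) (a a' : ℕ → ℝ)
    (haj : a j ≤ 1 + ε / harm k * (harm k - harm (k - j)))
    (hai : ∀ i : ℕ, j < i → i ≤ k → 1 + ε / harm k * (harm k - harm (k - i)) ≤ a i)
    (ha' : ∀ i : ℕ, j < i → i ≤ k → a' i ≤ a j) :
    ε / harm n * ((k : ℝ) - (j : ℝ)) ≤ ∑ i ∈ Finset.Icc (j + 1) k, (a i - a' i) := by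
  calc ε / harm n * ((k : ℝ) - j)
      ≤ ε / harm k * ((k : ℝ) - j) := by
        gcongr
        exacts [sub_nonneg.2 (by exact_mod_cast hj.le), harm_pos (Nat.zero_lt_of_lt hj),
          harm_mono hkn]
    _ = ∑ i ∈ Icc (j + 1) k, ε / harm k * (harm (k - j) - harm (k - i)) := by
        rw [sum_Icc_comp_sub (fun t => ε / harm k * (harm (k - j) - harm t)) hj.le, ← mul_sum,
          sum_range_harm_sub, Nat.cast_sub hj.le]
    _ ≤ ∑ i ∈ Icc (j + 1) k, (a i - a' i) := by
        refine sum_le_sum fun i hi => ?_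
        obtain ⟨hji, hik⟩ := mem_Icc.1 hi
        linarith [hai i hji hik, ha' i hji hik]

/-- Per-phase stretch decrease: if `α_j ≤ γ_j`, `α_i ≥ γ_i` and `α'_i ≤ α_j` for
`j < i ≤ k`, then `∑_{i=j+1}^{k} (α_i − α'_i) ≥ (ε/H_n)·(k − j)`. -/
theorem stretch_decrease_per_edge (ε : ℝ) (hε : 0 < ε) (n k : ℕ) (hk : 1 ≤ k)
    (hkn : k ≤ n) (j : ℕ) (hj : j < k) (a a' : ℕ → ℝ)
    (haj : a j ≤ 1 + ε / harm k * (harm k - harm (k - j)))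
    (hai : ∀ i : ℕ, j < i → i ≤ k → 1 + ε / harm k * (harm k - harm (k - i)) ≤ a i)
    (ha' : ∀ i : ℕ, j < i → i ≤ k → a' i ≤ a j) :
    ε / harm n * ((k : ℝ) - (j : ℝ)) ≤ ∑ i ∈ Finset.Icc (j + 1) k, (a i - a' i) :=
  stretch_decrease_per_edge_general ε hε n k hkn j hj a a' haj hai ha'
end

section
/- Let G be an undirected 2-edge-connected graph with positive real edge weights, let s ∈ V(G), and let T be a shortest-path tree of G rooted at s (a spanning tree with d_T(s,t) = d_G(s,t) for all t). Let e = (u,v) ∈ E(T) with u the endpoint closer to s, let D_G(e) be the vertex set of the component of T − e containing v and U_G(e) the component containing s, and let f be the (unique) edge of a fixed shortest path from s to v in G − e that has one endpoint in U_G(e) and the other in D_G(e). Then for every vertex t ∈ D_G(e), the distance from s to t in T − e + f is at most 3 · d_{G−e}(s,t). -/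
open SimpleGraph

noncomputable def walkWeight {V : Type*} {G : SimpleGraph V} (w : V → V → ℝ)
    {x y : V} (p : G.Walk x y) : ℝ :=
  (p.darts.map (fun d => w d.toProd.1 d.toProd.2)).sum

noncomputable def wdist {V : Type*} (G : SimpleGraph V) (w : V → V → ℝ) (x y : V) : ℝ :=
  sInf {r : ℝ | ∃ p : G.Walk x y, walkWeight w p = r}

section Aux

variable {V : Type*} {K K₁ K₂ : SimpleGraph V} {w : V → V → ℝ} {a b c : V}

lemma sw_weight_nil : walkWeight w (Walk.nil : K.Walk a a) = 0 := rfl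

lemma sw_weight_cons (h : K.Adj a b) (p : K.Walk b c) :
    walkWeight w (Walk.cons h p) = w a b + walkWeight w p := by
  simp [walkWeight]

lemma sw_weight_append {d : V} (p : K.Walk a b) (q : K.Walk b d) :
    walkWeight w (p.append q) = walkWeight w p + walkWeight w q := by
  induction p with
  | nil => simp [walkWeight]
  | cons h p ih => simp only [Walk.cons_append, sw_weight_cons, ih]; ring

lemma sw_weight_nonneg (hK : ∀ a b, K.Adj a b → 0 ≤ w a b) (p : K.Walk a b) :
    0 ≤ walkWeight w p := by
  induction p with
  | nil => simp [sw_weight_nil]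
  | cons h p ih => rw [sw_weight_cons]; exact add_nonneg (hK _ _ h) ih

lemma sw_bdd (hK : ∀ a b, K.Adj a b → 0 ≤ w a b) :
    BddBelow {r : ℝ | ∃ p : K.Walk a b, walkWeight w p = r} := by
  refine ⟨0, ?_⟩
  rintro r ⟨p, rfl⟩
  exact sw_weight_nonneg hK p

lemma sw_nonempty (h : K.Reachable a b) :
    Set.Nonempty {r : ℝ | ∃ p : K.Walk a b, walkWeight w p = r} := by
  obtain ⟨p⟩ := h
  exact ⟨walkWeight w p, p, rfl⟩

lemma sw_wdist_le (hK : ∀ a b, K.Adj a b → 0 ≤ w a b) (p : K.Walk a b) :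
    wdist K w a b ≤ walkWeight w p :=
  csInf_le (sw_bdd hK) ⟨p, rfl⟩

lemma sw_le_wdist (h : K.Reachable a b) {r : ℝ}
    (hr : ∀ p : K.Walk a b, r ≤ walkWeight w p) : r ≤ wdist K w a b := by
  refine le_csInf (sw_nonempty h) ?_
  rintro q ⟨p, rfl⟩
  exact hr p

lemma sw_wdist_nonneg (hK : ∀ a b, K.Adj a b → 0 ≤ w a b) (h : K.Reachable a b) :
    0 ≤ wdist K w a b :=
  sw_le_wdist h fun p => sw_weight_nonneg hK p

lemma sw_triangle (hK : ∀ a b, K.Adj a b → 0 ≤ w a b)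
    (hab : K.Reachable a b) (hbc : K.Reachable b c) :
    wdist K w a c ≤ wdist K w a b + wdist K w b c := by
  have key : ∀ (p : K.Walk a b) (q : K.Walk b c),
      wdist K w a c ≤ walkWeight w p + walkWeight w q := by
    intro p q
    calc wdist K w a c ≤ walkWeight w (p.append q) := sw_wdist_le hK _
    _ = _ := sw_weight_append p q
  rw [← sub_le_iff_le_add']
  refine sw_le_wdist hbc fun q => ?_
  rw [sub_le_iff_le_add', ← sub_le_iff_le_add]
  refine sw_le_wdist hab fun p => ?_
  rw [sub_le_iff_le_add]
  linarith [key p q]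

lemma sw_transfer (hle : K₁ ≤ K₂) (p : K₁.Walk a b) :
    ∃ q : K₂.Walk a b, walkWeight w q = walkWeight w p := by
  induction p with
  | nil => exact ⟨Walk.nil, rfl⟩
  | cons h p ih =>
    obtain ⟨q, hq⟩ := ih
    exact ⟨Walk.cons (hle h) q, by rw [sw_weight_cons, sw_weight_cons, hq]⟩

lemma sw_mono (hle : K₁ ≤ K₂) (hK : ∀ a b, K₂.Adj a b → 0 ≤ w a b)
    (hab : K₁.Reachable a b) : wdist K₂ w a b ≤ wdist K₁ w a b := by
  refine sw_le_wdist hab fun p => ?_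
  obtain ⟨q, hq⟩ := sw_transfer hle p
  rw [← hq]
  exact sw_wdist_le hK q

lemma sw_reverse (hsym : ∀ a b, w a b = w b a) (p : K.Walk a b) :
    ∃ q : K.Walk b a, walkWeight w q = walkWeight w p := by
  induction p with
  | nil => exact ⟨Walk.nil, rfl⟩
  | cons h p ih =>
    obtain ⟨q, hq⟩ := ih
    refine ⟨q.append (Walk.cons h.symm Walk.nil), ?_⟩
    rw [sw_weight_append, sw_weight_cons, sw_weight_nil, sw_weight_cons, hq,
      hsym _ _]
    ring

lemma sw_symm (hsym : ∀ a b, w a b = w b a) :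
    wdist K w a b = wdist K w b a := by
  unfold wdist
  congr 1
  ext r
  constructor
  · rintro ⟨p, rfl⟩
    obtain ⟨q, hq⟩ := sw_reverse hsym p
    exact ⟨q, hq⟩
  · rintro ⟨p, rfl⟩
    obtain ⟨q, hq⟩ := sw_reverse hsym p
    exact ⟨q, hq⟩

lemma sw_adj_le (hK : ∀ a b, K.Adj a b → 0 ≤ w a b) (h : K.Adj a b) :
    wdist K w a b ≤ w a b := by
  have := sw_wdist_le hK (Walk.cons h Walk.nil)
  rwa [sw_weight_cons, sw_weight_nil, add_zero] at this

lemma sw_split (p : K.Walk a b) (d : K.Dart) (hd : d ∈ p.darts) :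
    ∃ (p₁ : K.Walk a d.toProd.1) (p₂ : K.Walk d.toProd.2 b),
      walkWeight w p = walkWeight w p₁ + w d.toProd.1 d.toProd.2 + walkWeight w p₂ := by
  induction p with
  | nil => simp at hd
  | @cons a c b h p ih =>
    rw [Walk.darts_cons, List.mem_cons] at hd
    rcases hd with hd | hd
    · subst hd
      exact ⟨Walk.nil, p, by rw [sw_weight_cons, sw_weight_nil]; ring⟩
    · obtain ⟨q₁, q₂, hq⟩ := ih hd
      exact ⟨Walk.cons h q₁, q₂, by rw [sw_weight_cons, sw_weight_cons, hq]; ring⟩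

end Aux


/-- The 3-stretch swap-edge property from [NPW03]: replacing the failed tree edge
`e = (u,v)` by the swap edge `f = (x,y)` lying on a shortest path from `s` to `v`
in `G − e` yields distances from `s` to the disconnected vertices stretched by at
most a factor 3. -/
theorem swap_edge_three_stretch
    {V : Type*} (G T : SimpleGraph V) (w : V → V → ℝ) (s u v x y : V)
    (hsym : ∀ a b : V, w a b = w b a)
    (hpos : ∀ a b : V, G.Adj a b → 0 < w a b)
    (h2ec : ∀ e ∈ G.edgeSet, (G.deleteEdges {e}).Connected)
    (hTG : T ≤ G) (hTree : T.IsTree)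
    (hSPT : ∀ t : V, wdist T w s t = wdist G w s t)
    (huv : T.Adj u v)
    (hcloser : ¬ (T.deleteEdges {s(u, v)}).Reachable s v)
    (hxU : (T.deleteEdges {s(u, v)}).Reachable s x)
    (hyD : (T.deleteEdges {s(u, v)}).Reachable v y)
    (hswap : ∃ p : (G.deleteEdges {s(u, v)}).Walk s v,
        walkWeight w p = wdist (G.deleteEdges {s(u, v)}) w s v ∧ s(x, y) ∈ p.edges) :
    ∀ t : V, (T.deleteEdges {s(u, v)}).Reachable v t →
      wdist (T.deleteEdges {s(u, v)} ⊔ SimpleGraph.fromEdgeSet {s(x, y)}) w s t ≤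
        3 * wdist (G.deleteEdges {s(u, v)}) w s t := by
  classical
  intro t htD
  set T' := T.deleteEdges {s(u, v)} with hT'def
  set G' := G.deleteEdges {s(u, v)} with hG'def
  set H := T' ⊔ SimpleGraph.fromEdgeSet {s(x, y)} with hHdef
  obtain ⟨p, hpw, hpe⟩ := hswap
  -- basic adjacency and positivity facts
  have hGuv : G.Adj u v := hTG huv
  have hxyG' : G'.Adj x y := p.adj_of_mem_edges hpe
  have hG'G : G' ≤ G := deleteEdges_le _
  have hxyG : G.Adj x y := hG'G hxyG'
  have hwf : 0 < w x y := hpos _ _ hxyG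
  have hT'T : T' ≤ T := deleteEdges_le _
  have hT'G' : T' ≤ G' := by
    intro a b hab
    rw [hT'def, deleteEdges_adj] at hab
    rw [hG'def, deleteEdges_adj]
    exact ⟨hTG hab.1, hab.2⟩
  have hT'G : T' ≤ G := le_trans hT'T hTG
  have hHG : H ≤ G := by
    refine sup_le hT'G ?_
    intro a b hab
    rw [fromEdgeSet_adj, Set.mem_singleton_iff, Sym2.eq_iff] at hab
    rcases hab.1 with ⟨rfl, rfl⟩ | ⟨rfl, rfl⟩
    · exact hxyG
    · exact hxyG.symm
  -- nonnegativity of weights on each graph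
  have hnnG : ∀ a b, G.Adj a b → 0 ≤ w a b := fun a b h => (hpos a b h).le
  have hnnG' : ∀ a b, G'.Adj a b → 0 ≤ w a b := fun a b h => hnnG a b (hG'G h)
  have hnnT : ∀ a b, T.Adj a b → 0 ≤ w a b := fun a b h => hnnG a b (hTG h)
  have hnnT' : ∀ a b, T'.Adj a b → 0 ≤ w a b := fun a b h => hnnG a b (hT'G h)
  have hnnH : ∀ a b, H.Adj a b → 0 ≤ w a b := fun a b h => hnnG a b (hHG h)
  -- connectivity
  have hGconn : G.Connected := hTree.isConnected.mono hTG
  have hG'conn : G'.Connected := h2ec _ ((mem_edgeSet G).mpr hGuv)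
  have rG : ∀ a b : V, G.Reachable a b := fun a b => hGconn.preconnected a b
  have rG' : ∀ a b : V, G'.Reachable a b := fun a b => hG'conn.preconnected a b
  have rT : ∀ a b : V, T.Reachable a b := fun a b => hTree.isConnected.preconnected a b
  -- s and v are in different components of T', but u is on s's side
  have hdisj : ∀ z, T'.Reachable s z → T'.Reachable v z → False :=
    fun z h1 h2 => hcloser (h1.trans h2.symm)
  have huU : T'.Reachable s u := by
    obtain ⟨q0⟩ := rT s v
    set qp := q0.toPath.1 with hqp
    have hqpath : qp.IsPath := q0.toPath.2
    have hedge : s(u, v) ∈ qp.edges := by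
      by_contra hne
      refine hcloser ⟨qp.toDeleteEdges _ ?_⟩
      intro e he hmem
      rw [Set.mem_singleton_iff] at hmem
      exact hne (hmem ▸ he)
    have hu_sup : u ∈ qp.support := qp.fst_mem_support_of_mem_edges hedge
    have hnotin : s(u, v) ∉ (qp.takeUntil u hu_sup).edges := by
      intro hmem
      have hv1 : v ∈ (qp.takeUntil u hu_sup).support :=
        Walk.snd_mem_support_of_mem_edges _ hmem
      have hv2 : v ∈ (qp.dropUntil u hu_sup).support.tail := by
        have h1 : v ∈ (qp.dropUntil u hu_sup).support := Walk.end_mem_support _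
        rw [Walk.support_eq_cons (qp.dropUntil u hu_sup)] at h1
        rcases List.mem_cons.mp h1 with h | h
        · exact absurd h huv.ne'
        · exact h
      have hnd : ((qp.takeUntil u hu_sup).append (qp.dropUntil u hu_sup)).support.Nodup := by
        rw [Walk.take_spec]
        exact hqpath.support_nodup
      rw [Walk.support_append] at hnd
      exact List.disjoint_of_nodup_append hnd hv1 hv2
    refine ⟨(qp.takeUntil u hu_sup).toDeleteEdges _ ?_⟩
    intro e he hmem
    rw [Set.mem_singleton_iff] at hmem
    exact hnotin (hmem ▸ he)
  -- the cut lemma: lower bounds for the weight of any walk in T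
  have hwuv : 0 ≤ w u v := hnnT u v huv
  have cut : ∀ (a b : V) (q : T.Walk a b),
      (T'.Reachable s a → T'.Reachable s b → wdist T' w a b ≤ walkWeight w q) ∧
      (T'.Reachable s a → T'.Reachable v b →
        wdist T' w a u + w u v + wdist T' w v b ≤ walkWeight w q) ∧
      (T'.Reachable v a → T'.Reachable s b →
        wdist T' w a v + w u v + wdist T' w u b ≤ walkWeight w q) ∧
      (T'.Reachable v a → T'.Reachable v b → wdist T' w a b ≤ walkWeight w q) := by
    intro a b q
    induction q with
    | nil =>
      rename_i a
      have hself : wdist T' w a a ≤ 0 := by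
        have := sw_wdist_le hnnT' (Walk.nil : T'.Walk a a)
        rwa [sw_weight_nil] at this
      refine ⟨fun _ _ => by rwa [sw_weight_nil], fun h1 h2 => absurd h2 (fun h2 => hdisj a h1 h2),
        fun h1 h2 => absurd h1 (fun h1 => hdisj a h2 h1), fun _ _ => by rwa [sw_weight_nil]⟩
    | @cons a c b h q ih =>
      obtain ⟨ih1, ih2, ih3, ih4⟩ := ih
      rw [sw_weight_cons]
      have hq0 : 0 ≤ walkWeight w q := sw_weight_nonneg hnnT q
      by_cases hE : s(a, c) = s(u, v)
      · rcases Sym2.eq_iff.mp hE with ⟨ha, hc⟩ | ⟨ha, hc⟩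
        · -- a = u, c = v
          have ha2 := ha.symm; have hc2 := hc.symm; subst ha2; subst hc2
          have hvv : wdist T' w v v ≤ 0 := by
            have := sw_wdist_le hnnT' (Walk.nil : T'.Walk v v)
            rwa [sw_weight_nil] at this
          have hvv' : 0 ≤ wdist T' w v v := sw_wdist_nonneg hnnT' (Reachable.refl v)
          have huu : wdist T' w u u ≤ 0 := by
            have := sw_wdist_le hnnT' (Walk.nil : T'.Walk u u)
            rwa [sw_weight_nil] at this
          have huu' : 0 ≤ wdist T' w u u := sw_wdist_nonneg hnnT' (Reachable.refl u)
          refine ⟨fun h1 h2 => ?_, fun h1 h2 => ?_, fun h1 h2 => ?_, fun h1 h2 => ?_⟩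
          · have := ih3 (Reachable.refl v) h2; linarith
          · have := ih4 (Reachable.refl v) h2; linarith
          · exact absurd h1 (fun h1 => hdisj u huU h1)
          · exact absurd h1 (fun h1 => hdisj u huU h1)
        · -- a = v, c = u
          have ha2 := ha.symm; have hc2 := hc.symm; subst ha2; subst hc2
          have hvv : wdist T' w v v ≤ 0 := by
            have := sw_wdist_le hnnT' (Walk.nil : T'.Walk v v)
            rwa [sw_weight_nil] at this
          have hvv' : 0 ≤ wdist T' w v v := sw_wdist_nonneg hnnT' (Reachable.refl v)
          have huu : wdist T' w u u ≤ 0 := by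
            have := sw_wdist_le hnnT' (Walk.nil : T'.Walk u u)
            rwa [sw_weight_nil] at this
          have huu' : 0 ≤ wdist T' w u u := sw_wdist_nonneg hnnT' (Reachable.refl u)
          have hsw : w v u = w u v := hsym v u
          refine ⟨fun h1 h2 => ?_, fun h1 h2 => ?_, fun h1 h2 => ?_, fun h1 h2 => ?_⟩
          · exact absurd h1 (fun h1 => hcloser h1)
          · exact absurd h1 (fun h1 => hcloser h1)
          · have := ih1 huU h2; linarith
          · have := ih2 huU h2; linarith
      · have hadj : T'.Adj a c := by
          rw [hT'def, deleteEdges_adj]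
          exact ⟨h, by simpa using hE⟩
        have hwac : wdist T' w a c ≤ w a c := sw_adj_le hnnT' hadj
        have hwac0 : 0 ≤ w a c := hnnT a c h
        refine ⟨fun h1 h2 => ?_, fun h1 h2 => ?_, fun h1 h2 => ?_, fun h1 h2 => ?_⟩
        · have hUc : T'.Reachable s c := h1.trans hadj.reachable
          have := ih1 hUc h2
          have htri := sw_triangle hnnT' hadj.reachable (hUc.symm.trans h2) (c := b) (a := a)
          linarith
        · have hUc : T'.Reachable s c := h1.trans hadj.reachable
          have := ih2 hUc h2
          have htri := sw_triangle hnnT' hadj.reachable (hUc.symm.trans huU) (c := u) (a := a)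
          linarith
        · have hDc : T'.Reachable v c := h1.trans hadj.reachable
          have := ih3 hDc h2
          have htri := sw_triangle hnnT' hadj.reachable (hDc.symm.trans (Reachable.refl v))
            (c := v) (a := a)
          linarith
        · have hDc : T'.Reachable v c := h1.trans hadj.reachable
          have := ih4 hDc h2
          have htri := sw_triangle hnnT' hadj.reachable (hDc.symm.trans h2) (c := b) (a := a)
          linarith
  -- corollaries of the cut lemma
  have hC1 : wdist T' w s x ≤ wdist G w s x := by
    rw [← hSPT x]
    exact sw_le_wdist (rT s x) (fun q => (cut s x q).1 (Reachable.refl s) hxU)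
  have hSv : wdist G w s v ≤ wdist T' w s u + w u v := by
    rw [← hSPT v]
    have h1 : wdist T w s v ≤ wdist T w s u + wdist T w u v :=
      sw_triangle hnnT (rT s u) huv.reachable
    have h2 : wdist T w s u ≤ wdist T' w s u := sw_mono hT'T hnnT huU
    have h3 : wdist T w u v ≤ w u v := sw_adj_le hnnT huv
    linarith
  have hC2 : ∀ z, T'.Reachable v z → wdist T' w v z ≤ wdist G w s z - wdist G w s v := by
    intro z hz
    have h1 : wdist T' w s u + w u v + wdist T' w v z ≤ wdist T w s z :=
      sw_le_wdist (rT s z) (fun q => (cut s z q).2.1 (Reachable.refl s) hz)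
    rw [hSPT z] at h1
    linarith
  -- split p at the dart with edge s(x,y)
  have hpe' : s(x, y) ∈ p.darts.map Dart.edge := hpe
  obtain ⟨d, hd, hde⟩ := List.mem_map.mp hpe'
  obtain ⟨⟨d1, d2⟩, hdadj⟩ := d
  have hde' : s(d1, d2) = s(x, y) := hde
  obtain ⟨p₁, p₂, hsplit⟩ := sw_split (w := w) p _ hd
  -- common quantities
  have hS0 : 0 ≤ wdist G w s v := sw_wdist_nonneg hnnG (rG s v)
  have hWP : wdist G w s t ≤ wdist G' w s t := sw_mono hG'G hnnG (rG' s t)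
  have hvt : wdist T' w v t ≤ wdist G w s t - wdist G w s v := hC2 t htD
  dsimp only at hsplit
  rcases Sym2.eq_iff.mp hde' with ⟨hd1, hd2⟩ | ⟨hd1, hd2⟩
  · -- case 1
    -- dart is (x, y) : p₁ : s → x, p₂ : y → v
    have hd1' := hd1.symm; have hd2' := hd2.symm; subst hd1'; subst hd2'
    -- route in H
    have rHsx : H.Reachable s x := hxU.mono le_sup_left
    have hHxy : H.Adj x y := by
      rw [hHdef, sup_adj]
      exact Or.inr ((fromEdgeSet_adj _).mpr ⟨rfl, hxyG.ne⟩)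
    have rHyv : H.Reachable y v := (hyD.mono le_sup_left).symm
    have rHvt : H.Reachable v t := htD.mono le_sup_left
    have tri1 : wdist H w s t ≤ wdist H w s x + wdist H w x t :=
      sw_triangle hnnH rHsx (hHxy.reachable.trans (rHyv.trans rHvt))
    have tri2 : wdist H w x t ≤ wdist H w x y + wdist H w y t :=
      sw_triangle hnnH hHxy.reachable (rHyv.trans rHvt)
    have tri3 : wdist H w y t ≤ wdist H w y v + wdist H w v t :=
      sw_triangle hnnH rHyv rHvt
    -- bound the four pieces
    have b1 : wdist H w s x ≤ walkWeight w p₁ := by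
      have m1 : wdist H w s x ≤ wdist T' w s x := sw_mono le_sup_left hnnH hxU
      have m2 : wdist G w s x ≤ wdist G' w s x := sw_mono hG'G hnnG (rG' s x)
      have m3 : wdist G' w s x ≤ walkWeight w p₁ := sw_wdist_le hnnG' p₁
      linarith
    have b2 : wdist H w x y ≤ w x y := sw_adj_le hnnH hHxy
    have b3 : wdist H w y v ≤ walkWeight w p₂ := by
      have m1 : wdist H w y v ≤ wdist T' w y v := sw_mono le_sup_left hnnH hyD.symm
      have m2 : wdist T' w y v = wdist T' w v y := sw_symm hsym
      have m3 : wdist T' w v y ≤ wdist G w s y - wdist G w s v := hC2 y hyD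
      have m4 : wdist G w s y ≤ wdist G w s v + wdist G w v y :=
        sw_triangle hnnG (rG s v) (rG v y)
      have m5 : wdist G w v y ≤ wdist G' w v y := sw_mono hG'G hnnG (rG' v y)
      have m6 : wdist G' w v y = wdist G' w y v := sw_symm hsym
      have m7 : wdist G' w y v ≤ walkWeight w p₂ := sw_wdist_le hnnG' p₂
      linarith
    have b4 : wdist H w v t ≤ wdist T' w v t := sw_mono le_sup_left hnnH htD
    -- Q ≤ P + (W - S)
    have hQ : wdist G' w s v ≤ wdist G' w s t + (wdist G w s t - wdist G w s v) := by
      have t1 : wdist G' w s v ≤ wdist G' w s t + wdist G' w t v :=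
        sw_triangle hnnG' (rG' s t) (rG' t v)
      have t2 : wdist G' w t v = wdist G' w v t := sw_symm hsym
      have t3 : wdist G' w v t ≤ wdist T' w v t := sw_mono hT'G' hnnG' htD
      linarith
    have hsum : walkWeight w p₁ + w x y + walkWeight w p₂ = wdist G' w s v := by
      rw [← hpw, hsplit]
    linarith
  · -- case 2 : dart is (y, x) : p₁ : s → y, p₂ : x → v ; contradiction
    have hd1' := hd1.symm; have hd2' := hd2.symm; subst hd1'; subst hd2'
    exfalso
    have hsum : walkWeight w p₁ + w y x + walkWeight w p₂ = wdist G' w s v := by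
      rw [← hpw, hsplit]
    rw [hsym y x] at hsum
    have i1 : wdist G' w s v ≤ wdist G w s x + walkWeight w p₂ := by
      have t1 : wdist G' w s v ≤ wdist G' w s x + wdist G' w x v :=
        sw_triangle hnnG' (rG' s x) (rG' x v)
      have t2 : wdist G' w s x ≤ wdist T' w s x := sw_mono hT'G' hnnG' hxU
      have t3 : wdist G' w x v ≤ walkWeight w p₂ := sw_wdist_le hnnG' p₂
      linarith
    have i2 : wdist G w s y ≤ walkWeight w p₁ := by
      have t1 : wdist G w s y ≤ wdist G' w s y := sw_mono hG'G hnnG (rG' s y)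
      have t2 : wdist G' w s y ≤ walkWeight w p₁ := sw_wdist_le hnnG' p₁
      linarith
    have i3 : wdist G w s x ≤ wdist G w s y + w x y := by
      have t1 : wdist G w s x ≤ wdist G w s y + wdist G w y x :=
        sw_triangle hnnG (rG s y) (rG y x)
      have t2 : wdist G w y x ≤ w y x := sw_adj_le hnnG hxyG.symm
      rw [hsym y x] at t2
      linarith
    have i4 : wdist G' w s v ≤ walkWeight w p₁ + (wdist G w s y - wdist G w s v) := by
      have t1 : wdist G' w s v ≤ wdist G' w s y + wdist G' w y v :=
        sw_triangle hnnG' (rG' s y) (rG' y v)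
      have t2 : wdist G' w s y ≤ walkWeight w p₁ := sw_wdist_le hnnG' p₁
      have t3 : wdist G' w y v ≤ wdist T' w y v := sw_mono hT'G' hnnG' hyD.symm
      have t4 : wdist T' w y v = wdist T' w v y := sw_symm hsym
      have t5 : wdist T' w v y ≤ wdist G w s y - wdist G w s v := hC2 y hyD
      linarith
    have i5 : wdist G w s x ≤ wdist G w s v + walkWeight w p₂ := by
      have t1 : wdist G w s x ≤ wdist G w s v + wdist G w v x :=
        sw_triangle hnnG (rG s v) (rG v x)
      have t2 : wdist G w v x ≤ wdist G' w v x := sw_mono hG'G hnnG (rG' v x)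
      have t3 : wdist G' w v x = wdist G' w x v := sw_symm hsym
      have t4 : wdist G' w x v ≤ walkWeight w p₂ := sw_wdist_le hnnG' p₂
      linarith
    linarith
end

section
/- There is a constant c > 0 such that for infinitely many natural numbers n there exists an undirected 2-edge-connected graph G on n vertices with positive real edge weights and a source vertex s ∈ V(G) with the following property: every spanning subgraph H of G satisfying d_{H−e}(s,t) = d_{G−e}(s,t) for all edges e ∈ E(G) and all vertices t ∈ V(G) has at least c · n² edges. (Exact edge-fault-tolerant single-source distance preservation may require Θ(n²) edges.) -/
open SimpleGraph

/-!
The graph on `2m` vertices is a unit-weight path `u₀ … u_{m-1}` together with all edges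
`uᵢ b` to the other `m` vertices `b`, of weight `2(m - i)`; the source is `u₀`. In `Fin (2 * m)`,
`uᵢ` is `i` and the `b`'s are `m, …, 2m - 1`.
When the path edge `uᵢ u_{i+1}` fails, the unique shortest route from `u₀` to every `b` is
`u₀ … uᵢ b`, of length `2m - i`: the potential equal to `x` on `u_x` for `x ≤ i` and to `2m - i`
everywhere else is a feasible dual certifying this. Raising the potential at `b` by one stays
feasible on every edge except `uᵢ b`, so without that edge the distance would grow. Hence every
structure keeps all `(m - 1) m` edges `uᵢ b` with `i < m - 1`.
-/

section Potential

variable {V : Type*} {G H : SimpleGraph V} (w : V → V → ℝ)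

@[simp]
lemma walkWeight_nil {x : V} : walkWeight w (Walk.nil : G.Walk x x) = 0 := by
  simp [walkWeight]

lemma walkWeight_concat {x y z : V} (p : G.Walk x y) (h : G.Adj y z) :
    walkWeight w (p.concat h) = walkWeight w p + w y z := by
  simp [walkWeight, Walk.darts_concat]

variable {w}

lemma le_walkWeight_of_potential {φ : V → ℝ} (hφ : ∀ a b, G.Adj a b → φ b ≤ φ a + w a b)
    {x y : V} (p : G.Walk x y) : φ y ≤ φ x + walkWeight w p := by
  induction p with
  | nil => simp
  | @cons a b c hab q ih =>
    have := hφ a b hab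
    simp only [walkWeight, Walk.darts_cons, List.map_cons, List.sum_cons] at ih ⊢
    linarith

lemma le_wdist_of_potential {φ : V → ℝ} (hφ : ∀ a b, G.Adj a b → φ b ≤ φ a + w a b)
    {x y : V} (h : G.Reachable x y) : φ y - φ x ≤ wdist G w x y := by
  obtain ⟨p⟩ := h
  refine le_csInf ⟨walkWeight w p, p, rfl⟩ ?_
  rintro r ⟨q, rfl⟩
  linarith [le_walkWeight_of_potential hφ q]

lemma wdist_eq_of_potential {φ : V → ℝ} (hφ : ∀ a b, G.Adj a b → φ b ≤ φ a + w a b)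
    {x y : V} (p : G.Walk x y) (hp : walkWeight w p ≤ φ y - φ x) :
    wdist G w x y = φ y - φ x := by
  refine le_antisymm ?_ (le_wdist_of_potential hφ p.reachable)
  have hbdd : BddBelow {r | ∃ q : G.Walk x y, walkWeight w q = r} := by
    refine ⟨φ y - φ x, ?_⟩
    rintro r ⟨q, rfl⟩
    linarith [le_walkWeight_of_potential hφ q]
  exact (csInf_le hbdd ⟨p, rfl⟩).trans hp

/-- `wdist` is `sInf ∅ = 0` between vertices joined by no walk. -/
lemma reachable_of_wdist_ne_zero {x y : V} (h : wdist G w x y ≠ 0) : G.Reachable x y := by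
  by_contra hxy
  have hempty : {r : ℝ | ∃ p : G.Walk x y, walkWeight w p = r} = ∅ :=
    Set.eq_empty_of_forall_notMem fun _ ⟨p, _⟩ => hxy p.reachable
  exact h (by rw [wdist, hempty, Real.sInf_empty])

lemma mem_edgeSet_of_wdist_eq {f : Sym2 V} {ψ : V → ℝ} (hHG : H ≤ G)
    (hψ : ∀ a b, G.Adj a b → s(a, b) ≠ f → ψ b ≤ ψ a + w a b) {x y : V}
    (hlt : wdist G w x y < ψ y - ψ x) (hne : wdist G w x y ≠ 0)
    (heq : wdist H w x y = wdist G w x y) : f ∈ H.edgeSet := by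
  by_contra hf
  have hψH : ∀ a b, H.Adj a b → ψ b ≤ ψ a + w a b := fun a b hab =>
    hψ a b (hHG hab) fun h => hf (h ▸ hab)
  have hreach : H.Reachable x y := reachable_of_wdist_ne_zero (heq ▸ hne)
  linarith [le_wdist_of_potential hψH hreach]

end Potential

section Construction

variable {m : ℕ}

def detourGraph (m : ℕ) : SimpleGraph (Fin (2 * m)) :=
  fromRel fun x y => (x.val + 1 = y.val ∧ y.val < m) ∨ (x.val < m ∧ m ≤ y.val)

def detourWeight (m : ℕ) (x y : Fin (2 * m)) : ℕ :=
  if x.val < m ∧ m ≤ y.val then 2 * (m - x.val)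
  else if y.val < m ∧ m ≤ x.val then 2 * (m - y.val) else 1

/-- The shortest-path potential from `u₀` after the path edge `uᵢ u_{i+1}` fails. -/
def detourPotential (m i : ℕ) (x : Fin (2 * m)) : ℕ :=
  if x.val ≤ i then x.val else 2 * m - i

lemma detourWeight_comm (x y : Fin (2 * m)) : detourWeight m x y = detourWeight m y x := by
  unfold detourWeight
  split_ifs <;> omega

lemma detourWeight_pos (x y : Fin (2 * m)) : 0 < detourWeight m x y := by
  unfold detourWeight
  split_ifs <;> omega

lemma detourWeight_of_lt_of_lt {x y : Fin (2 * m)} (hx : x.val < m) (hy : y.val < m) :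
    detourWeight m x y = 1 := by
  unfold detourWeight
  split_ifs <;> omega

lemma detourWeight_of_lt_of_le {x y : Fin (2 * m)} (hx : x.val < m) (hy : m ≤ y.val) :
    detourWeight m x y = 2 * (m - x.val) :=
  if_pos ⟨hx, hy⟩

lemma detourGraph_adj_of_lt_of_le {x y : Fin (2 * m)} (hx : x.val < m) (hy : m ≤ y.val) :
    (detourGraph m).Adj x y :=
  (fromRel_adj _ _ _).2 ⟨by omega, Or.inl (Or.inr ⟨hx, hy⟩)⟩

lemma detourGraph_adj_of_succ {x y : Fin (2 * m)} (hxy : x.val + 1 = y.val) (hy : y.val < m) :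
    (detourGraph m).Adj x y :=
  (fromRel_adj _ _ _).2 ⟨by omega, Or.inl (Or.inl ⟨hxy, hy⟩)⟩

lemma detourGraph_deleteEdges_reachable (hm : 2 ≤ m) (e : Sym2 (Fin (2 * m)))
    {x y : Fin (2 * m)} (hx : x.val < m) (hy : m ≤ y.val) :
    ((detourGraph m).deleteEdges {e}).Reachable x y := by
  have hadj : ∀ {a b : Fin (2 * m)}, a.val < m → m ≤ b.val → s(a, b) ≠ e →
      ((detourGraph m).deleteEdges {e}).Adj a b := fun ha hb hab =>
    deleteEdges_adj.2 ⟨detourGraph_adj_of_lt_of_le ha hb, hab⟩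
  by_cases hxy : s(x, y) = e
  · -- detour `x → y' → x' → y` through another path vertex `x'` and another vertex `y'`
    subst hxy
    let x' : Fin (2 * m) := ⟨if x.val = 0 then 1 else 0, by split_ifs <;> omega⟩
    let y' : Fin (2 * m) := ⟨if y.val = m then m + 1 else m, by split_ifs <;> omega⟩
    have hx' : x'.val < m := by simp only [x']; split_ifs <;> omega
    have hy' : m ≤ y'.val := by simp only [y']; split_ifs <;> omega
    have hxx' : x'.val ≠ x.val := by simp only [x']; split_ifs <;> omega
    have hyy' : y'.val ≠ y.val := by simp only [y']; split_ifs <;> omega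
    have hne : ∀ {a b : Fin (2 * m)}, (a.val ≠ x.val ∨ b.val ≠ y.val) → a.val < m → m ≤ b.val →
        s(a, b) ≠ s(x, y) := by
      intro a b h ha hb
      simp only [ne_eq, Sym2.eq_iff, Fin.ext_iff]
      omega
    exact (hadj hx hy' (hne (Or.inr hyy') hx hy')).reachable.trans
      ((hadj hx' hy' (hne (Or.inl hxx') hx' hy')).reachable.symm.trans
        (hadj hx' hy (hne (Or.inl hxx') hx' hy)).reachable)
  · exact (hadj hx hy hxy).reachable

lemma detourGraph_deleteEdges_connected (hm : 2 ≤ m) (e : Sym2 (Fin (2 * m))) :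
    ((detourGraph m).deleteEdges {e}).Connected := by
  let u₀ : Fin (2 * m) := ⟨0, by omega⟩
  let b₀ : Fin (2 * m) := ⟨m, by omega⟩
  refine (connected_iff_exists_forall_reachable _).2 ⟨b₀, fun x => ?_⟩
  by_cases hx : x.val < m
  · exact (detourGraph_deleteEdges_reachable hm e hx le_rfl).symm
  · exact (detourGraph_deleteEdges_reachable hm e (show u₀.val < m by simp [u₀]; omega)
      le_rfl).symm.trans (detourGraph_deleteEdges_reachable hm e (by simp [u₀]; omega)
        (by omega))

lemma detourPotential_le {u u' a b : Fin (2 * m)} (hu : u.val + 1 = u'.val) (hu' : u'.val < m)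
    (hab : ((detourGraph m).deleteEdges {s(u, u')}).Adj a b) :
    detourPotential m u b ≤ detourPotential m u a + detourWeight m a b := by
  simp only [detourGraph, deleteEdges_adj, fromRel_adj, Set.mem_singleton_iff, Sym2.eq_iff,
    Fin.ext_iff] at hab
  unfold detourPotential detourWeight
  split_ifs <;> omega

lemma detourPotential_add_indicator_le {u u' v a b : Fin (2 * m)} (hu : u.val + 1 = u'.val)
    (hu' : u'.val < m) (hv : m ≤ v.val) (hab : ((detourGraph m).deleteEdges {s(u, u')}).Adj a b)
    (hf : s(a, b) ≠ s(u, v)) :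
    detourPotential m u b + (if b = v then 1 else 0) ≤
      detourPotential m u a + (if a = v then 1 else 0) + detourWeight m a b := by
  simp only [detourGraph, deleteEdges_adj, fromRel_adj, Set.mem_singleton_iff, ne_eq, Sym2.eq_iff,
    Fin.ext_iff] at hab hf
  unfold detourPotential detourWeight
  split_ifs <;> omega

lemma exists_walk_detourGraph_deleteEdges {u u' : Fin (2 * m)} (hu : u.val + 1 = u'.val)
    (hu' : u'.val < m) (k : ℕ) (hk : k ≤ u.val) :
    ∃ p : ((detourGraph m).deleteEdges {s(u, u')}).Walk ⟨0, by omega⟩ ⟨k, by omega⟩,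
      walkWeight (fun x y => (detourWeight m x y : ℝ)) p = k := by
  induction k with
  | zero => exact ⟨Walk.nil, by simp⟩
  | succ k ih =>
    obtain ⟨p, hp⟩ := ih (by omega)
    have hadj : ((detourGraph m).deleteEdges {s(u, u')}).Adj ⟨k, by omega⟩ ⟨k + 1, by omega⟩ := by
      simp [detourGraph, deleteEdges_adj, Fin.ext_iff]
      omega
    refine ⟨p.concat hadj, ?_⟩
    rw [walkWeight_concat, hp, detourWeight_of_lt_of_lt (by simp; omega) (by simp; omega)]
    push_cast
    rfl

lemma wdist_detourGraph_deleteEdges {u u' v : Fin (2 * m)} (hu : u.val + 1 = u'.val)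
    (hu' : u'.val < m) (hv : m ≤ v.val) :
    wdist ((detourGraph m).deleteEdges {s(u, u')}) (fun x y => (detourWeight m x y : ℝ))
      ⟨0, by omega⟩ v = 2 * m - u.val := by
  obtain ⟨p, hp⟩ : ∃ p : ((detourGraph m).deleteEdges {s(u, u')}).Walk ⟨0, by omega⟩ u,
      walkWeight (fun x y => (detourWeight m x y : ℝ)) p = u.val :=
    exists_walk_detourGraph_deleteEdges hu hu' u.val le_rfl
  have huv : ((detourGraph m).deleteEdges {s(u, u')}).Adj u v := by
    simp only [detourGraph, deleteEdges_adj, fromRel_adj, Set.mem_singleton_iff, Sym2.eq_iff,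
      Fin.ext_iff]
    omega
  have hφ : ∀ a b, ((detourGraph m).deleteEdges {s(u, u')}).Adj a b →
      (detourPotential m u b : ℝ) ≤ detourPotential m u a + detourWeight m a b := fun a b hab => by
    exact_mod_cast detourPotential_le hu hu' hab
  have hpot : (detourPotential m u v : ℝ) - detourPotential m u ⟨0, by omega⟩ = 2 * m - u.val := by
    rw [detourPotential, if_neg (by omega), detourPotential, if_pos (Nat.zero_le _),
      Nat.cast_sub (by omega)]
    push_cast
    ring
  have hweight : walkWeight (fun x y => (detourWeight m x y : ℝ)) (p.concat huv) =
      2 * m - u.val := by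
    rw [walkWeight_concat, hp, detourWeight_of_lt_of_le (by omega) hv, Nat.cast_mul,
      Nat.cast_sub (by omega)]
    push_cast
    ring
  rw [wdist_eq_of_potential hφ (p.concat huv) (by rw [hweight, hpot]), hpot]

lemma detourGraph_adj_of_wdist_eq {H : SimpleGraph (Fin (2 * m))} (hHG : H ≤ detourGraph m)
    {u v : Fin (2 * m)} (hu : u.val + 1 < m) (hv : m ≤ v.val)
    (hH : ∀ e ∈ (detourGraph m).edgeSet, ∀ t : Fin (2 * m),
      wdist (H.deleteEdges {e}) (fun x y => (detourWeight m x y : ℝ)) ⟨0, by omega⟩ t =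
        wdist ((detourGraph m).deleteEdges {e}) (fun x y => (detourWeight m x y : ℝ))
          ⟨0, by omega⟩ t) :
    H.Adj u v := by
  obtain ⟨u', hu'⟩ : ∃ u' : Fin (2 * m), u.val + 1 = u'.val := ⟨⟨u.val + 1, by omega⟩, rfl⟩
  have hdist := wdist_detourGraph_deleteEdges hu' (by omega) hv
  let ψ : Fin (2 * m) → ℝ := fun x => (detourPotential m u x + if x = v then 1 else 0 : ℕ)
  have hψ : ∀ a b, ((detourGraph m).deleteEdges {s(u, u')}).Adj a b → s(a, b) ≠ s(u, v) →
      ψ b ≤ ψ a + detourWeight m a b := fun a b hab hf => by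
    simp only [ψ]
    exact_mod_cast detourPotential_add_indicator_le hu' (by omega) hv hab hf
  have hψv : ψ v = 2 * m - u.val + 1 := by
    simp only [ψ, detourPotential, if_neg (show ¬v.val ≤ u.val by omega)]
    push_cast [Nat.cast_sub (show u.val ≤ 2 * m by omega)]
    ring
  have hψ₀ : ψ ⟨0, by omega⟩ = 0 := by
    have hv₀ : (⟨0, by omega⟩ : Fin (2 * m)) ≠ v := Fin.ne_of_val_ne (show 0 ≠ v.val by omega)
    simp only [ψ, detourPotential, if_neg hv₀]
    simp
  have hum : (u.val : ℝ) < m := by exact_mod_cast (show u.val < m by omega)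
  have hmem := mem_edgeSet_of_wdist_eq (deleteEdges_mono hHG) hψ
    (by rw [hdist, hψv, hψ₀]; linarith) (by rw [hdist]; exact ne_of_gt (by linarith))
    (hH _ (detourGraph_adj_of_succ hu' (by omega)) v)
  exact deleteEdges_le _ ((mem_edgeSet _).1 hmem)

lemma le_ncard_edgeSet_of_forall_adj {H : SimpleGraph (Fin (2 * m))}
    (hH : ∀ u v : Fin (2 * m), u.val + 1 < m → m ≤ v.val → H.Adj u v) :
    (m - 1) * m ≤ H.edgeSet.ncard := by
  let f : Fin (m - 1) × Fin m → Sym2 (Fin (2 * m)) := fun p =>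
    s(⟨p.1, by omega⟩, ⟨m + p.2, by omega⟩)
  have hf := Set.ncard_le_ncard_of_injOn f (s := Set.univ) (t := H.edgeSet)
    (fun p _ => hH _ _ (by simp; omega) (by simp))
    (fun p _ q _ h => by simp only [f, Sym2.eq_iff, Fin.ext_iff] at h; ext <;> omega)
  simpa [Set.ncard_univ] using hf

end Construction

/-- Exact edge-fault-tolerant single-source distance preservation may require
`Θ(n²)` edges. -/
theorem exact_ESPT_lower_bound :
    ∃ c : ℝ, 0 < c ∧
      ∀ N : ℕ, ∃ n : ℕ, N ≤ n ∧
        ∃ (G : SimpleGraph (Fin n)) (w : Fin n → Fin n → ℝ) (s : Fin n),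
          (∀ a b : Fin n, w a b = w b a) ∧
          (∀ a b : Fin n, G.Adj a b → 0 < w a b) ∧
          (∀ e ∈ G.edgeSet, (G.deleteEdges {e}).Connected) ∧
          ∀ H : SimpleGraph (Fin n), H ≤ G →
            (∀ e ∈ G.edgeSet, ∀ t : Fin n,
              wdist (H.deleteEdges {e}) w s t = wdist (G.deleteEdges {e}) w s t) →
            c * (n : ℝ) ^ 2 ≤ (H.edgeSet.ncard : ℝ) := by
  refine ⟨1 / 8, by norm_num, fun N => ?_⟩
  obtain ⟨m, hm, hNm⟩ : ∃ m, 2 ≤ m ∧ N ≤ 2 * m := ⟨max 2 N, le_max_left _ _, by omega⟩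
  refine ⟨2 * m, hNm, detourGraph m, fun x y => detourWeight m x y, ⟨0, by omega⟩,
    fun a b => by simp only [detourWeight_comm a b],
    fun a b _ => Nat.cast_pos.2 (detourWeight_pos a b),
    fun e _ => detourGraph_deleteEdges_connected hm e, fun H hHG hH => ?_⟩
  have hcard : (((m - 1) * m : ℕ) : ℝ) ≤ H.edgeSet.ncard := by
    exact_mod_cast le_ncard_edgeSet_of_forall_adj fun u v hu hv =>
      detourGraph_adj_of_wdist_eq hHG hu hv hH
  have hm' : (2 : ℝ) ≤ m := by exact_mod_cast hm
  rw [Nat.cast_mul, Nat.cast_sub (by omega)] at hcard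
  push_cast at hcard ⊢
  nlinarith
end
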